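/- Let U be a utility functional and R a risk functional. Then (U,R)-portfolio selection is market-independent weakly well posed if at least one of the following conditions holds: (a) U is weakly sensitive to large losses; (b) R satisfies the lower Fatou property, is positively star-shaped, and is sensitive to large losses. -/
import Mathlib


open MeasureTheory Filter
open scoped ENNReal

namespace URPaper

variable {Ω : Type*} [MeasurableSpace Ω]

/-- The payoff `π · X` of the portfolio `π` in the market `X`. -/
def port {d : ℕ} (X : Fin d → Ω → ℝ) (π : Fin d → ℝ) : Ω → ℝ :=
  fun ω => ∑ i, π i * X i ω

/-- The scaled position `l • Y`. -/
def scale (l : ℝ) (Y : Ω → ℝ) : Ω → ℝ := fun ω => l * Y ω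

/-- A functional is increasing (with respect to the a.s. order on `L¹`). -/
def MonoInc (μ : Measure Ω) (U : (Ω → ℝ) → EReal) : Prop :=
  ∀ Y Z : Ω → ℝ, Integrable Y μ → Integrable Z μ →
    (∀ᵐ ω ∂μ, Y ω ≤ Z ω) → U Y ≤ U Z

/-- A functional is decreasing (with respect to the a.s. order on `L¹`). -/
def MonoDec (μ : Measure Ω) (R : (Ω → ℝ) → EReal) : Prop :=
  ∀ Y Z : Ω → ℝ, Integrable Y μ → Integrable Z μ →
    (∀ᵐ ω ∂μ, Y ω ≤ Z ω) → R Z ≤ R Y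

/-- `U(∞)`: the limit of `U` along deterministic constants `y → ∞`
(equal to the supremum, since `U` is increasing along constants). -/
noncomputable def limConst (U : (Ω → ℝ) → EReal) : EReal := ⨆ y : ℝ, U (fun _ => y)

/-- A utility functional: increasing, normalized, `[-∞,∞)`-valued,
and satisfying `U(Y) < U(∞)` for all `Y ∈ L¹`. -/
structure IsUtility (μ : Measure Ω) (U : (Ω → ℝ) → EReal) : Prop where
  mono : MonoInc μ U
  norm : U (fun _ => (0 : ℝ)) = 0
  ne_top : ∀ Y : Ω → ℝ, Integrable Y μ → U Y ≠ ⊤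
  non_sat : ∀ Y : Ω → ℝ, Integrable Y μ → U Y < limConst U

/-- A risk functional: decreasing, normalized, `(-∞,∞]`-valued. -/
structure IsRisk (μ : Measure Ω) (R : (Ω → ℝ) → EReal) : Prop where
  mono : MonoDec μ R
  norm : R (fun _ => (0 : ℝ)) = 0
  ne_bot : ∀ Y : Ω → ℝ, Integrable Y μ → R Y ≠ ⊥

/-- Positive star-shapedness: `R(λY) ≥ λ R(Y)` for `λ > 1`. -/
def PosStarShaped (μ : Measure Ω) (R : (Ω → ℝ) → EReal) : Prop :=
  ∀ Y : Ω → ℝ, Integrable Y μ → ∀ l : ℝ, 1 < l → (l : EReal) * R Y ≤ R (scale l Y)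

/-- The lower Fatou property. -/
def LowerFatou (μ : Measure Ω) (R : (Ω → ℝ) → EReal) : Prop :=
  ∀ (Yn : ℕ → Ω → ℝ) (Y Z : Ω → ℝ), (∀ n, Integrable (Yn n) μ) →
    Integrable Y μ → Integrable Z μ →
    (∀ᵐ ω ∂μ, Tendsto (fun n => Yn n ω) atTop (nhds (Y ω))) →
    (∀ n, ∀ᵐ ω ∂μ, |Yn n ω| ≤ Z ω) →
    R Y ≤ Filter.liminf (fun n => R (Yn n)) atTop

/-- The upper Fatou property. -/
def UpperFatou (μ : Measure Ω) (U : (Ω → ℝ) → EReal) : Prop :=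
  ∀ (Yn : ℕ → Ω → ℝ) (Y Z : Ω → ℝ), (∀ n, Integrable (Yn n) μ) →
    Integrable Y μ → Integrable Z μ →
    (∀ᵐ ω ∂μ, Tendsto (fun n => Yn n ω) atTop (nhds (Y ω))) →
    (∀ n, ∀ᵐ ω ∂μ, |Yn n ω| ≤ Z ω) →
    Filter.limsup (fun n => U (Yn n)) atTop ≤ U Y

/-- Sensitivity to large losses for a risk functional. -/
def SensLLRisk (μ : Measure Ω) (R : (Ω → ℝ) → EReal) : Prop :=
  ∀ Y : Ω → ℝ, Integrable Y μ → 0 < μ {ω | Y ω < 0} →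
    ∃ l₀ : ℝ, 0 < l₀ ∧ ∀ l : ℝ, l₀ < l → 0 < R (scale l Y)

/-- Sensitivity to large losses for a utility functional. -/
def SensLLUtility (μ : Measure Ω) (U : (Ω → ℝ) → EReal) : Prop :=
  ∀ Y : Ω → ℝ, Integrable Y μ → 0 < μ {ω | Y ω < 0} →
    ∃ l₀ : ℝ, 0 < l₀ ∧ ∀ l : ℝ, l₀ < l → U (scale l Y) < 0

/-- Weak sensitivity to large losses for a utility functional. -/
def WeakSensLLUtility (μ : Measure Ω) (U : (Ω → ℝ) → EReal) : Prop :=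
  ∀ Y : Ω → ℝ, Integrable Y μ → 0 < μ {ω | Y ω < 0} →
    Filter.limsup (fun l : ℝ => U (scale l Y)) atTop < limConst U

/-- Sensitivity equivalence for a utility functional. -/
def SensEquivUtility (μ : Measure Ω) (U : (Ω → ℝ) → EReal) : Prop :=
  WeakSensLLUtility μ U ↔ SensLLUtility μ U

/-- Law-invariance of a functional on `L¹`. -/
def LawInvariant (μ : Measure Ω) (H : (Ω → ℝ) → EReal) : Prop :=
  ∀ Y Z : Ω → ℝ, Integrable Y μ → Integrable Z μ →
    ProbabilityTheory.IdentDistrib Y Z μ μ → H Y = H Z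

/-- Cash-additivity: `H(Y + c) = H(Y) + H(c)` for constants `c`. -/
def CashAdditive (μ : Measure Ω) (H : (Ω → ℝ) → EReal) : Prop :=
  ∀ Y : Ω → ℝ, Integrable Y μ → ∀ c : ℝ,
    H (fun ω => Y ω + c) = H Y + H (fun _ => c)

/-- Cash-convexity of a risk functional. -/
def CashConvex (μ : Measure Ω) (R : (Ω → ℝ) → EReal) : Prop :=
  ∀ Y : Ω → ℝ, Integrable Y μ → ∀ c l : ℝ, 0 < l → l < 1 →
    R (fun ω => l * Y ω + (1 - l) * c) ≤
      (l : EReal) * R Y + ((1 - l : ℝ) : EReal) * R (fun _ => c)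

/-- Cash-concavity of a utility functional. -/
def CashConcave (μ : Measure Ω) (U : (Ω → ℝ) → EReal) : Prop :=
  ∀ Y : Ω → ℝ, Integrable Y μ → ∀ c l : ℝ, 0 < l → l < 1 →
    (l : EReal) * U Y + ((1 - l : ℝ) : EReal) * U (fun _ => c) ≤
      U (fun ω => l * Y ω + (1 - l) * c)

/-- Strict quasi-concavity of a utility functional. -/
def StrictQuasiConcave (μ : Measure Ω) (U : (Ω → ℝ) → EReal) : Prop :=
  ∀ Y Z : Ω → ℝ, Integrable Y μ → Integrable Z μ → 0 < μ {ω | Y ω ≠ Z ω} →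
    ∀ l : ℝ, 0 < l → l < 1 →
      min (U Y) (U Z) < U (fun ω => l * Y ω + (1 - l) * Z ω)

/-- Quasi-convexity of a risk functional. -/
def QuasiConvex (μ : Measure Ω) (R : (Ω → ℝ) → EReal) : Prop :=
  ∀ Y Z : Ω → ℝ, Integrable Y μ → Integrable Z μ → ∀ l : ℝ, 0 < l → l < 1 →
    R (fun ω => l * Y ω + (1 - l) * Z ω) ≤ max (R Y) (R Z)

/-- An atomless measure. -/
def Atomless (μ : Measure Ω) : Prop :=
  ∀ s : Set Ω, MeasurableSet s → μ s ≠ 0 →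
    ∃ t : Set Ω, t ⊆ s ∧ MeasurableSet t ∧ 0 < μ t ∧ μ t < μ s

/-- A market: a finite tuple of integrable payoffs, non-redundant
(linearly independent in `L¹`) and arbitrage-free. -/
structure IsMarket (μ : Measure Ω) {d : ℕ} (X : Fin d → Ω → ℝ) : Prop where
  integrable : ∀ i, Integrable (X i) μ
  nonredundant : ∀ π : Fin d → ℝ, (∀ᵐ ω ∂μ, port X π ω = 0) → π = 0
  no_arbitrage : ¬∃ π : Fin d → ℝ,
      (∀ᵐ ω ∂μ, 0 ≤ port X π ω) ∧ 0 < μ {ω | 0 < port X π ω}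

/-- `(U,R)`-portfolio selection is weakly well posed for the market `X`. -/
def WeaklyWellPosedFor (U R : (Ω → ℝ) → EReal) {d : ℕ} (X : Fin d → Ω → ℝ) : Prop :=
  ∀ Rmax : ℝ, 0 ≤ Rmax →
    (⨆ π : {π : Fin d → ℝ // R (port X π) ≤ (Rmax : EReal)}, U (port X π.1)) < limConst U

/-- `(U,R)`-portfolio selection is well posed for the market `X`:
the supremum is attained by some portfolio. -/
def WellPosedFor (U R : (Ω → ℝ) → EReal) {d : ℕ} (X : Fin d → Ω → ℝ) : Prop :=
  ∀ Rmax : ℝ, 0 ≤ Rmax →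
    ∃ πs : Fin d → ℝ, R (port X πs) ≤ (Rmax : EReal) ∧
      ∀ π : Fin d → ℝ, R (port X π) ≤ (Rmax : EReal) → U (port X π) ≤ U (port X πs)

/-- Market-independent weak well-posedness. -/
def MIWeaklyWellPosed (μ : Measure Ω) (U R : (Ω → ℝ) → EReal) : Prop :=
  ∀ (d : ℕ), 0 < d → ∀ X : Fin d → Ω → ℝ, IsMarket μ X → WeaklyWellPosedFor U R X

/-- Market-independent well-posedness. -/
def MIWellPosed (μ : Measure Ω) (U R : (Ω → ℝ) → EReal) : Prop :=
  ∀ (d : ℕ), 0 < d → ∀ X : Fin d → Ω → ℝ, IsMarket μ X → WellPosedFor U R X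

/-- The market `X` admits `(U,R)`-arbitrage. -/
def URArbitrage (U R : (Ω → ℝ) → EReal) {d : ℕ} (X : Fin d → Ω → ℝ) : Prop :=
  ∃ (π : ℕ → Fin d → ℝ) (Rt : ℝ), 0 ≤ Rt ∧
    Tendsto (fun n => U (port X (π n))) atTop (nhds (limConst U)) ∧
    ∀ n, R (port X (π n)) ≤ (Rt : EReal)

/-- The terminal payoff `θ · S̄₁` of a portfolio `θ` in a normalized market model
with interest rate `r` and risky payoffs `S`. -/
def mmPayoff {d : ℕ} (r : ℝ) (S : Fin d → Ω → ℝ) (θ : Fin (d + 1) → ℝ) : Ω → ℝ :=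
  fun ω => θ 0 * (1 + r) + ∑ i : Fin d, θ i.succ * S i ω

/-- A normalized, arbitrage-free and non-redundant market model with `d` risky assets:
all initial prices are `1`, asset `0` is riskless with payoff `1 + r`. -/
structure MarketModel (μ : Measure Ω) (d : ℕ) where
  r : ℝ
  hr : -1 < r
  S : Fin d → Ω → ℝ
  integrable : ∀ i, Integrable (S i) μ
  nonredundant : ∀ θ : Fin (d + 1) → ℝ, (∀ᵐ ω ∂μ, mmPayoff r S θ ω = 0) → θ = 0
  no_arbitrage : ¬∃ θ : Fin (d + 1) → ℝ, (∑ j, θ j) ≤ 0 ∧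
    (∀ᵐ ω ∂μ, 0 ≤ mmPayoff r S θ ω) ∧ 0 < μ {ω | 0 < mmPayoff r S θ ω}

/-- The terminal payoff `θ · S̄₁`. -/
def payoff {μ : Measure Ω} {d : ℕ} (M : MarketModel μ d) (θ : Fin (d + 1) → ℝ) : Ω → ℝ :=
  mmPayoff M.r M.S θ

/-- The initial cost `θ · S̄₀` (all initial prices are normalized to `1`). -/
def cost {μ : Measure Ω} {d : ℕ} (_M : MarketModel μ d) (θ : Fin (d + 1) → ℝ) : ℝ :=
  ∑ j, θ j

/-- The positive part of an extended real number, as an element of `ℝ≥0∞`. -/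
noncomputable def posPart (x : EReal) : ℝ≥0∞ :=
  if x = ⊤ then ⊤ else ENNReal.ofReal x.toReal

/-- The expected utility `E[u(Y)]` of a position `Y`, as an extended real number. -/
noncomputable def expEU (μ : Measure Ω) (u : ℝ → EReal) (Y : Ω → ℝ) : EReal :=
  ((∫⁻ ω, posPart (u (Y ω)) ∂μ : ℝ≥0∞) : EReal) -
    ((∫⁻ ω, posPart (-(u (Y ω))) ∂μ : ℝ≥0∞) : EReal)

/-- A utility function: increasing, normalized, `[-∞,∞)`-valued, non-satiated
(`u(∞) > u(z)` for all `z`), and of at most linear growth at `+∞`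
(`limsup_{y→∞} u(y)/y < ∞`). -/
structure IsUtilityFun (u : ℝ → EReal) : Prop where
  mono : Monotone u
  norm : u 0 = 0
  ne_top : ∀ y : ℝ, u y ≠ ⊤
  non_sat : ∀ z : ℝ, u z < ⨆ y : ℝ, u y
  growth : ∃ a : ℝ, ∀ᶠ y in (atTop : Filter ℝ), u y ≤ ((a * y : ℝ) : EReal)

/-- `u` is unbounded (its range is not contained in any bounded interval of `ℝ`). -/
def UnboundedFun (u : ℝ → EReal) : Prop :=
  ¬∃ C : ℝ, ∀ y : ℝ, ((-C : ℝ) : EReal) ≤ u y ∧ u y ≤ ((C : ℝ) : EReal)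

/-- `u` is negatively star-shaped on `ℝ₊`: `u(λy) ≤ λ u(y)` for `y ≥ 0`, `λ ≥ 1`. -/
def NegStarShapedPos (u : ℝ → EReal) : Prop :=
  ∀ y : ℝ, 0 ≤ y → ∀ l : ℝ, 1 ≤ l → u (l * y) ≤ (l : EReal) * u y

/-- The asymptotic loss-gain ratio `ALG(u) = limsup_{y→∞} u(-y)/u(y)`. -/
noncomputable def ALG (u : ℝ → EReal) : EReal :=
  Filter.limsup (fun y : ℝ => u (-y) / u y) atTop

/-- Strict concavity of a `[-∞,∞)`-valued utility function. -/
def StrictConcaveFun (u : ℝ → EReal) : Prop :=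
  ∀ y z : ℝ, y ≠ z → ∀ l : ℝ, 0 < l → l < 1 →
    (l : EReal) * u y + ((1 - l : ℝ) : EReal) * u z < u (l * y + (1 - l) * z)


section Stmt6Aux

variable {μ : Measure Ω} {d : ℕ} {X : Fin d → Ω → ℝ} {U R : (Ω → ℝ) → EReal}

private lemma port_int (hX : ∀ i, Integrable (X i) μ) (π : Fin d → ℝ) :
    Integrable (port X π) μ := by
  unfold port
  exact integrable_finset_sum _ fun i _ => (hX i).const_mul _

private lemma absSum_int (hX : ∀ i, Integrable (X i) μ) :
    Integrable (fun ω => ∑ i, |X i ω|) μ :=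
  integrable_finset_sum _ fun i _ => (hX i).abs

private lemma absSum_nonneg (X : Fin d → Ω → ℝ) (ω : Ω) : 0 ≤ ∑ i, |X i ω| :=
  Finset.sum_nonneg fun _ _ => abs_nonneg _

private lemma abs_port_le (π : Fin d → ℝ) (ω : Ω) :
    |port X π ω| ≤ ‖π‖ * ∑ i, |X i ω| := by
  show |∑ i, π i * X i ω| ≤ ‖π‖ * ∑ i, |X i ω|
  calc |∑ i, π i * X i ω| ≤ ∑ i, |π i * X i ω| := Finset.abs_sum_le_sum_abs _ _
    _ ≤ ∑ i, ‖π‖ * |X i ω| := Finset.sum_le_sum fun i _ => by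
        rw [abs_mul]
        exact mul_le_mul_of_nonneg_right (by simpa using norm_le_pi_norm π i) (abs_nonneg _)
    _ = ‖π‖ * ∑ i, |X i ω| := by rw [Finset.mul_sum]

private lemma port_smul (a : ℝ) (π : Fin d → ℝ) (ω : Ω) :
    port X (a • π) ω = a * port X π ω := by
  simp [port, Finset.mul_sum, mul_assoc]

private lemma port_sub_le (σ ρ : Fin d → ℝ) (δ : ℝ) (hδ : ‖σ - ρ‖ ≤ δ) (ω : Ω) :
    port X σ ω ≤ port X ρ ω + δ * ∑ i, |X i ω| := by
  have h1 : port X σ ω - port X ρ ω = port X (σ - ρ) ω := by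
    simp [port, sub_mul, Finset.sum_sub_distrib]
  have h2 : port X (σ - ρ) ω ≤ ‖σ - ρ‖ * ∑ i, |X i ω| :=
    (le_abs_self _).trans (abs_port_le (σ - ρ) ω)
  have h3 : ‖σ - ρ‖ * ∑ i, |X i ω| ≤ δ * ∑ i, |X i ω| :=
    mul_le_mul_of_nonneg_right hδ (absSum_nonneg X ω)
  linarith

private lemma unit_dir_neg (hM : IsMarket μ X) {ρ : Fin d → ℝ} (hρ : ρ ≠ 0) :
    0 < μ {ω | port X ρ ω < 0} := by
  rcases eq_or_ne (μ {ω | port X ρ ω < 0}) 0 with h0 | h0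
  · exfalso
    have hset : {ω | ¬ 0 ≤ port X ρ ω} = {ω | port X ρ ω < 0} := by
      ext ω; simp [not_le]
    have hae : ∀ᵐ ω ∂μ, 0 ≤ port X ρ ω := by
      rw [ae_iff, hset]; exact h0
    rcases eq_or_ne (μ {ω | 0 < port X ρ ω}) 0 with hz | hp
    · have hset2 : {ω | ¬ port X ρ ω ≤ 0} = {ω | 0 < port X ρ ω} := by
        ext ω; simp [not_le]
      have hle : ∀ᵐ ω ∂μ, port X ρ ω ≤ 0 := by
        rw [ae_iff, hset2]; exact hz
      have hzero : ∀ᵐ ω ∂μ, port X ρ ω = 0 := by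
        filter_upwards [hae, hle] with ω h1 h2 using le_antisymm h2 h1
      exact hρ (hM.nonredundant ρ hzero)
    · exact hM.no_arbitrage ⟨ρ, hae, pos_iff_ne_zero.mpr hp⟩
  · exact pos_iff_ne_zero.mpr h0

private lemma exists_shift (X : Fin d → Ω → ℝ) (Y : Ω → ℝ) (hY : 0 < μ {ω | Y ω < 0}) :
    ∃ δ : ℝ, 0 < δ ∧ 0 < μ {ω | Y ω + δ * ∑ i, |X i ω| < 0} := by
  have h1 : ∃ n : ℕ, μ {ω | Y ω < -(1/((n:ℝ)+1))} ≠ 0 := by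
    by_contra hcon
    push_neg at hcon
    have hsub : {ω | Y ω < 0} ⊆ ⋃ n : ℕ, {ω | Y ω < -(1/((n:ℝ)+1))} := by
      intro ω hω
      simp only [Set.mem_setOf_eq] at hω
      obtain ⟨n, hn⟩ := exists_nat_gt (1 / (-Y ω))
      refine Set.mem_iUnion.mpr ⟨n, ?_⟩
      simp only [Set.mem_setOf_eq]
      have hY0 : 0 < -Y ω := by linarith
      have hn' : 1 < (n : ℝ) * (-Y ω) := by
        have := (div_lt_iff₀ hY0).mp hn
        linarith
      have : 1/((n:ℝ)+1) < -Y ω := by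
        rw [div_lt_iff₀ (by positivity)]
        nlinarith
      linarith
    exact absurd (measure_mono_null hsub (measure_iUnion_null hcon)) hY.ne'
  obtain ⟨n, hn⟩ := h1
  set c : ℝ := 1/((n:ℝ)+1) with hc
  have hc0 : 0 < c := by positivity
  have h2 : ∃ K : ℕ, μ ({ω | Y ω < -c} ∩ {ω | ∑ i, |X i ω| ≤ (K:ℝ)}) ≠ 0 := by
    by_contra hcon
    push_neg at hcon
    have hsub : {ω | Y ω < -c} ⊆
        ⋃ K : ℕ, ({ω | Y ω < -c} ∩ {ω | ∑ i, |X i ω| ≤ (K:ℝ)}) := by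
      intro ω hω
      obtain ⟨K, hK⟩ := exists_nat_ge (∑ i, |X i ω|)
      exact Set.mem_iUnion.mpr ⟨K, hω, hK⟩
    exact absurd (measure_mono_null hsub (measure_iUnion_null hcon)) hn
  obtain ⟨K, hK⟩ := h2
  refine ⟨c / (2*((K:ℝ)+1)), by positivity, ?_⟩
  refine lt_of_lt_of_le (pos_iff_ne_zero.mpr hK) (measure_mono ?_)
  rintro ω ⟨hω1, hω2⟩
  simp only [Set.mem_setOf_eq] at hω1 hω2 ⊢
  have h0 := absSum_nonneg X ω
  have hle : c/(2*((K:ℝ)+1)) * ∑ i, |X i ω| ≤ c/2 := by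
    rw [div_mul_eq_mul_div, div_le_div_iff₀ (by positivity) (by norm_num)]
    nlinarith
  linarith

private lemma ereal_mul_le {l ε : ℝ} (hl : 0 < l) {x : EReal} (h : (ε:EReal) ≤ x) :
    ((l*ε : ℝ) : EReal) ≤ (l:EReal) * x := by
  induction x using EReal.rec with
  | bot => exact absurd h (by simp)
  | coe r =>
    rw [← EReal.coe_mul, EReal.coe_le_coe_iff]
    exact mul_le_mul_of_nonneg_left (EReal.coe_le_coe_iff.mp h) hl.le
  | top =>
    rw [EReal.mul_top_of_pos (by exact_mod_cast hl)]
    exact le_top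

private lemma case_a (hU : IsUtility μ U) (hM : IsMarket μ X)
    (hws : WeakSensLLUtility μ U) {ρ : Fin d → ℝ} (hρ : ‖ρ‖ = 1) :
    ∃ δ : ℝ, 0 < δ ∧ ∃ b : EReal, b < limConst U ∧ ∃ Λ : ℝ,
      ∀ π : Fin d → ℝ, max Λ 1 ≤ ‖π‖ → ‖‖π‖⁻¹ • π - ρ‖ < δ →
        U (port X π) ≤ b := by
  have hρ0 : ρ ≠ 0 := fun h => by simp [h] at hρ
  obtain ⟨δ, hδ, hμδ⟩ := exists_shift X (port X ρ) (unit_dir_neg hM hρ0)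
  set Yd : Ω → ℝ := fun ω => port X ρ ω + δ * ∑ i, |X i ω| with hYddef
  have hYdint : Integrable Yd μ :=
    (port_int hM.integrable ρ).add ((absSum_int hM.integrable).const_mul δ)
  have hls := hws Yd hYdint hμδ
  obtain ⟨b, hb1, hb2⟩ := exists_between hls
  have hev : ∀ᶠ l : ℝ in atTop, U (scale l Yd) < b :=
    Filter.eventually_lt_of_limsup_lt hb1
  rw [eventually_atTop] at hev
  obtain ⟨Λ, hΛ⟩ := hev
  refine ⟨δ, hδ, b, hb2, Λ, fun π hπn hπd => ?_⟩
  have hπ1 : (1:ℝ) ≤ ‖π‖ := le_trans (le_max_right _ _) hπn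
  have hπ0 : π ≠ 0 := by
    intro h; rw [h, norm_zero] at hπ1; linarith
  have hpt : ∀ ω, port X π ω ≤ scale ‖π‖ Yd ω := by
    intro ω
    have h1 : port X π ω = ‖π‖ * port X (‖π‖⁻¹ • π) ω := by
      conv_lhs => rw [show π = ‖π‖ • (‖π‖⁻¹ • π) from
        (smul_inv_smul₀ (norm_ne_zero_iff.mpr hπ0) π).symm]
      exact port_smul _ _ _
    have h2 : port X (‖π‖⁻¹ • π) ω ≤ Yd ω := port_sub_le _ ρ δ hπd.le ω
    show port X π ω ≤ ‖π‖ * Yd ω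
    rw [h1]
    exact mul_le_mul_of_nonneg_left h2 (norm_nonneg π)
  have hmono := hU.mono (port X π) (scale ‖π‖ Yd) (port_int hM.integrable π)
      (hYdint.const_mul _) (ae_of_all _ hpt)
  exact hmono.trans (hΛ ‖π‖ (le_trans (le_max_left _ _) hπn)).le

private lemma case_b (hR : IsRisk μ R) (hM : IsMarket μ X) {Rmax : ℝ} (hRmax : 0 ≤ Rmax)
    (hf : LowerFatou μ R) (hss : PosStarShaped μ R) (hsl : SensLLRisk μ R)
    {ρ : Fin d → ℝ} (hρ : ‖ρ‖ = 1) :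
    ∃ δ : ℝ, 0 < δ ∧ ∃ M : ℝ, ∀ π : Fin d → ℝ, R (port X π) ≤ (Rmax : EReal) →
      1 ≤ ‖π‖ → ‖‖π‖⁻¹ • π - ρ‖ < δ → ‖π‖ ≤ M := by
  have hρ0 : ρ ≠ 0 := fun h => by simp [h] at hρ
  obtain ⟨l₀, hl₀, hsens⟩ := hsl (port X ρ) (port_int hM.integrable ρ) (unit_dir_neg hM hρ0)
  set lR : ℝ := l₀ + 1 with hlRdef
  have hlRpos : 0 < lR := by simp only [hlRdef]; linarith
  have hRpos : 0 < R (scale lR (port X ρ)) := hsens lR (by simp only [hlRdef]; linarith)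
  obtain ⟨ε, hε0, hε1⟩ := EReal.exists_between_coe_real hRpos
  have hε0' : (0:ℝ) < ε := by exact_mod_cast hε0
  have hδex : ∃ δ : ℝ, 0 < δ ∧ ∀ σ : Fin d → ℝ, ‖σ‖ = 1 → ‖σ - ρ‖ < δ →
      (ε : EReal) ≤ R (scale lR (port X σ)) := by
    by_contra hcon
    push_neg at hcon
    have h' : ∀ k : ℕ, ∃ σ : Fin d → ℝ, ‖σ‖ = 1 ∧ ‖σ - ρ‖ < 1/((k:ℝ)+1) ∧
        R (scale lR (port X σ)) < (ε:EReal) := by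
      intro k
      obtain ⟨σ, h1, h2, h3⟩ := hcon (1/((k:ℝ)+1)) (by positivity)
      exact ⟨σ, h1, h2, h3⟩
    choose σ hσ1 hσ2 hσ3 using h'
    have hconv : ∀ ω, Tendsto (fun k => scale lR (port X (σ k)) ω) atTop
        (nhds (scale lR (port X ρ) ω)) := by
      intro ω
      have hcoord : ∀ i, Tendsto (fun k => σ k i) atTop (nhds (ρ i)) := by
        intro i
        rw [tendsto_iff_dist_tendsto_zero]
        refine squeeze_zero (fun k => dist_nonneg) (fun k => ?_)
          tendsto_one_div_add_atTop_nhds_zero_nat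
        rw [Real.dist_eq]
        calc |σ k i - ρ i| ≤ ‖σ k - ρ‖ := by
              simpa using norm_le_pi_norm (σ k - ρ) i
          _ ≤ 1/((k:ℝ)+1) := (hσ2 k).le
      show Tendsto (fun k => lR * ∑ i, σ k i * X i ω) atTop
        (nhds (lR * ∑ i, ρ i * X i ω))
      exact (tendsto_finset_sum _ fun i _ => (hcoord i).mul_const (X i ω)).const_mul lR
    have hdom : ∀ k, ∀ᵐ ω ∂μ, |scale lR (port X (σ k)) ω| ≤
        scale lR (fun ω => ∑ i, |X i ω|) ω := by
      intro k
      refine ae_of_all _ fun ω => ?_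
      have h1 := abs_port_le (X := X) (σ k) ω
      rw [hσ1 k, one_mul] at h1
      show |lR * port X (σ k) ω| ≤ lR * ∑ i, |X i ω|
      rw [abs_mul, abs_of_pos hlRpos]
      exact mul_le_mul_of_nonneg_left h1 hlRpos.le
    have hfat := hf (fun k => scale lR (port X (σ k))) (scale lR (port X ρ))
        (scale lR (fun ω => ∑ i, |X i ω|))
        (fun k => (port_int hM.integrable (σ k)).const_mul lR)
        ((port_int hM.integrable ρ).const_mul lR)
        ((absSum_int hM.integrable).const_mul lR)
        (ae_of_all _ hconv) hdom
    have hliminf : Filter.liminf (fun k => R (scale lR (port X (σ k)))) atTop ≤ (ε:EReal) :=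
      liminf_le_of_frequently_le' (Filter.Frequently.of_forall fun k => (hσ3 k).le)
    exact absurd ((hε1.trans_le hfat).trans_le hliminf) (lt_irrefl _)
  obtain ⟨δ, hδ0, hδ⟩ := hδex
  refine ⟨δ, hδ0, lR * (Rmax/ε + 2), fun π hfeas hπ1 hπd => ?_⟩
  by_contra hMcon
  push_neg at hMcon
  have hπ0 : π ≠ 0 := by
    intro h; rw [h, norm_zero] at hπ1; linarith
  set σp : Fin d → ℝ := ‖π‖⁻¹ • π with hσpdef
  have hσn : ‖σp‖ = 1 := by
    rw [hσpdef, norm_smul, norm_inv, norm_norm,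
      inv_mul_cancel₀ (norm_ne_zero_iff.mpr hπ0)]
  have hεR := hδ σp hσn hπd
  set l : ℝ := ‖π‖ / lR with hldef
  have hRd0 : (0:ℝ) ≤ Rmax/ε := div_nonneg hRmax hε0'.le
  have hl1 : 1 < l := by
    rw [hldef, lt_div_iff₀ hlRpos]
    nlinarith
  have hstar := hss (scale lR (port X σp))
    ((port_int hM.integrable σp).const_mul lR) l hl1
  have hsc : scale l (scale lR (port X σp)) = port X π := by
    funext ω
    show l * (lR * port X σp ω) = port X π ω
    have hp : port X π ω = ‖π‖ * port X σp ω := by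
      conv_lhs => rw [show π = ‖π‖ • σp from
        (smul_inv_smul₀ (norm_ne_zero_iff.mpr hπ0) π).symm]
      exact port_smul _ _ _
    rw [hp, ← mul_assoc, hldef, div_mul_cancel₀ _ hlRpos.ne']
  rw [hsc] at hstar
  have hchain : ((l*ε:ℝ):EReal) ≤ (Rmax:EReal) :=
    (ereal_mul_le (lt_trans one_pos hl1) hεR).trans (hstar.trans hfeas)
  rw [EReal.coe_le_coe_iff] at hchain
  have h2 : Rmax/ε + 2 < l := by
    rw [hldef, lt_div_iff₀ hlRpos]
    nlinarith
  have hfin : Rmax < l * ε := by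
    have : Rmax = (Rmax/ε) * ε := by field_simp
    nlinarith
  linarith

end Stmt6Aux

/-- `(U,R)`-portfolio selection is market-independent weakly well posed if
(a) `U` is weakly sensitive to large losses, or (b) `R` has the lower Fatou property,
is positively star-shaped and sensitive to large losses. -/
theorem stmt6 {Ω : Type*} [MeasurableSpace Ω] (μ : Measure Ω) [IsProbabilityMeasure μ]
    (U R : (Ω → ℝ) → EReal) (hU : IsUtility μ U) (hR : IsRisk μ R)
    (h : WeakSensLLUtility μ U ∨
      (LowerFatou μ R ∧ PosStarShaped μ R ∧ SensLLRisk μ R)) :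
    MIWeaklyWellPosed μ U R := by
  intro d _hd X hM Rmax hRmax
  classical
  have hZint : Integrable (fun ω => ∑ i, |X i ω|) μ := absSum_int hM.integrable
  have h0L : (0:EReal) < limConst U := by
    have := hU.non_sat (fun _ => (0:ℝ)) (integrable_const 0)
    rwa [hU.norm] at this
  have key : ∃ b : EReal, b < limConst U ∧
      ∀ π : Fin d → ℝ, R (port X π) ≤ (Rmax : EReal) → U (port X π) ≤ b := by
    rcases h with hws | ⟨hf, hss, hsl⟩
    · -- case (a)
      have hpt : ∀ ρ : Metric.sphere (0 : Fin d → ℝ) 1, ∃ δ : ℝ, 0 < δ ∧ ∃ b : EReal,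
          b < limConst U ∧ ∃ Λ : ℝ, ∀ π : Fin d → ℝ, max Λ 1 ≤ ‖π‖ →
            ‖‖π‖⁻¹ • π - ρ.1‖ < δ → U (port X π) ≤ b :=
        fun ρ => case_a hU hM hws (mem_sphere_zero_iff_norm.mp ρ.2)
      choose δ hδ b hbL Λ hmain using hpt
      obtain ⟨t, ht⟩ := (isCompact_sphere (0 : Fin d → ℝ) 1).elim_finite_subcover
        (fun ρ : Metric.sphere (0 : Fin d → ℝ) 1 => Metric.ball ρ.1 (δ ρ))
        (fun ρ => Metric.isOpen_ball)
        (fun σ hσ => Set.mem_iUnion.mpr ⟨⟨σ, hσ⟩, by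
          simpa [Metric.mem_ball] using hδ ⟨σ, hσ⟩⟩)
      set M : ℝ := 1 + ∑ ρ ∈ t, max (max (Λ ρ) 1) 0 with hMdef
      have hsum0 : 0 ≤ ∑ ρ ∈ t, max (max (Λ ρ) 1) 0 :=
        Finset.sum_nonneg fun ρ _ => le_max_right _ _
      have hM1 : (1:ℝ) ≤ M := by simp only [hMdef]; linarith
      have hMΛ : ∀ ρ ∈ t, max (Λ ρ) 1 ≤ M := by
        intro ρ hρ
        have h1 := Finset.single_le_sum
          (f := fun ρ => max (max (Λ ρ) 1) 0) (fun ρ _ => le_max_right _ _) hρ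
        have h2 : max (Λ ρ) 1 ≤ max (max (Λ ρ) 1) 0 := le_max_left _ _
        simp only [hMdef]; linarith
      refine ⟨max (t.sup b) (U (scale M (fun ω => ∑ i, |X i ω|))),
        max_lt (Finset.sup_lt_iff (lt_of_le_of_lt bot_le h0L) |>.mpr fun ρ _ => hbL ρ)
          (hU.non_sat _ (hZint.const_mul M)), fun π hfeas => ?_⟩
      by_cases hc : ‖π‖ ≤ M
      · refine le_trans (hU.mono _ (scale M _) (port_int hM.integrable π)
          (hZint.const_mul M) (ae_of_all _ fun ω => ?_)) (le_max_right _ _)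
        show port X π ω ≤ M * ∑ i, |X i ω|
        calc port X π ω ≤ |port X π ω| := le_abs_self _
          _ ≤ ‖π‖ * ∑ i, |X i ω| := abs_port_le π ω
          _ ≤ M * ∑ i, |X i ω| := mul_le_mul_of_nonneg_right hc (absSum_nonneg X ω)
      · push_neg at hc
        have hπ0 : π ≠ 0 := by
          intro hz; rw [hz, norm_zero] at hc; linarith
        have hσs : (‖π‖⁻¹ • π) ∈ Metric.sphere (0 : Fin d → ℝ) 1 := by
          rw [mem_sphere_zero_iff_norm, norm_smul, norm_inv, norm_norm,
            inv_mul_cancel₀ (norm_ne_zero_iff.mpr hπ0)]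
        obtain ⟨ρ, hρt, hρball⟩ := Set.mem_iUnion₂.mp (ht hσs)
        refine le_trans (hmain ρ π ((hMΛ ρ hρt).trans hc.le) ?_)
          (le_trans (Finset.le_sup hρt) (le_max_left _ _))
        rw [← dist_eq_norm]
        exact hρball
    · -- case (b)
      have hpt : ∀ ρ : Metric.sphere (0 : Fin d → ℝ) 1, ∃ δ : ℝ, 0 < δ ∧ ∃ M : ℝ,
          ∀ π : Fin d → ℝ, R (port X π) ≤ (Rmax : EReal) → 1 ≤ ‖π‖ →
            ‖‖π‖⁻¹ • π - ρ.1‖ < δ → ‖π‖ ≤ M :=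
        fun ρ => case_b hR hM hRmax hf hss hsl (mem_sphere_zero_iff_norm.mp ρ.2)
      choose δ hδ Mf hmain using hpt
      obtain ⟨t, ht⟩ := (isCompact_sphere (0 : Fin d → ℝ) 1).elim_finite_subcover
        (fun ρ : Metric.sphere (0 : Fin d → ℝ) 1 => Metric.ball ρ.1 (δ ρ))
        (fun ρ => Metric.isOpen_ball)
        (fun σ hσ => Set.mem_iUnion.mpr ⟨⟨σ, hσ⟩, by
          simpa [Metric.mem_ball] using hδ ⟨σ, hσ⟩⟩)
      set M : ℝ := 1 + ∑ ρ ∈ t, max (Mf ρ) 0 with hMdef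
      have hsum0 : 0 ≤ ∑ ρ ∈ t, max (Mf ρ) 0 :=
        Finset.sum_nonneg fun ρ _ => le_max_right _ _
      have hM1 : (1:ℝ) ≤ M := by simp only [hMdef]; linarith
      have hMM : ∀ ρ ∈ t, Mf ρ ≤ M := by
        intro ρ hρ
        have h1 := Finset.single_le_sum
          (f := fun ρ => max (Mf ρ) 0) (fun ρ _ => le_max_right _ _) hρ
        have h2 : Mf ρ ≤ max (Mf ρ) 0 := le_max_left _ _
        simp only [hMdef]; linarith
      have hbound : ∀ π : Fin d → ℝ, R (port X π) ≤ (Rmax : EReal) → ‖π‖ ≤ M := by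
        intro π hfeas
        by_cases h1 : ‖π‖ ≤ 1
        · linarith
        · push_neg at h1
          have hπ0 : π ≠ 0 := by
            intro hz; rw [hz, norm_zero] at h1; linarith
          have hσs : (‖π‖⁻¹ • π) ∈ Metric.sphere (0 : Fin d → ℝ) 1 := by
            rw [mem_sphere_zero_iff_norm, norm_smul, norm_inv, norm_norm,
              inv_mul_cancel₀ (norm_ne_zero_iff.mpr hπ0)]
          obtain ⟨ρ, hρt, hρball⟩ := Set.mem_iUnion₂.mp (ht hσs)
          refine le_trans (hmain ρ π hfeas h1.le ?_) (hMM ρ hρt)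
          rw [← dist_eq_norm]
          exact hρball
      refine ⟨U (scale M (fun ω => ∑ i, |X i ω|)),
        hU.non_sat _ (hZint.const_mul M), fun π hfeas => ?_⟩
      refine hU.mono _ _ (port_int hM.integrable π) (hZint.const_mul M)
        (ae_of_all _ fun ω => ?_)
      show port X π ω ≤ M * ∑ i, |X i ω|
      calc port X π ω ≤ |port X π ω| := le_abs_self _
        _ ≤ ‖π‖ * ∑ i, |X i ω| := abs_port_le π ω
        _ ≤ M * ∑ i, |X i ω| :=
            mul_le_mul_of_nonneg_right (hbound π hfeas) (absSum_nonneg X ω)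
  obtain ⟨b, hbL, hb⟩ := key
  exact lt_of_le_of_lt (iSup_le fun π => hb π.1 π.2) hbL

end URPaper
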